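/- arXiv:2207.10079 — 2 statements merged into one kernel-verified Lean document; each statement's English description precedes it below -/
import Mathlib

section
/- Let F, S, S^f : ℝ → Matrix n n ℝ be differentiable with F(t) invertible and S(t) symmetric for every t, let p0 : ℝ → ℝ be a positive function, and let ℓ0 > 0, f^p > 0, k_off be real constants. Set l = F'·F⁻¹, τ = F·S·Fᵀ, τ^f = F·S^f·Fᵀ and E = ½(FᵀF − I). If τ satisfies the Kirchhoff-stress evolution equation τ' − l·τ − τ·lᵀ = −(1/(ℓ0 p0 f^p)) · (τ : l^{sym}) · τ + τ^f − k_off · τ for all t, then S satisfies the fully material evolution equation S' = −(1/(ℓ0 p0 f^p)) · (S : E') · S + S^f − k_off · S. -/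
/-!
Write `τ = F S Fᵀ` and `l = F' F⁻¹`. By the product rule `τ' = F' S Fᵀ + F S' Fᵀ + F S F'ᵀ`,
while `l τ = F' S Fᵀ` and `τ lᵀ = F S F'ᵀ`, so the Oldroyd rate `τ' − l τ − τ lᵀ` is the
push-forward `F S' Fᵀ` of `S'`. Cyclicity of the trace turns the stress power `τ : l^{sym}`
into `S : E'`, and `τ^f` is the push-forward of `S^f` by definition. Hence both sides of the
Kirchhoff equation are push-forwards `F (·) Fᵀ`, which is injective for invertible `F`.
-/

attribute [local instance] Matrix.normedAddCommGroup Matrix.normedSpace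

open Matrix

section Calculus

variable {𝕜 : Type*} [NontriviallyNormedField 𝕜] {l m n : Type*} [Fintype n] {t : 𝕜}

theorem hasDerivAt_matrix_iff {M : 𝕜 → Matrix m n 𝕜} {M' : Matrix m n 𝕜} :
    HasDerivAt M M' t ↔ ∀ i j, HasDerivAt (fun s => M s i j) (M' i j) t :=
  hasDerivAt_pi.trans (forall_congr' fun _ => hasDerivAt_pi)

variable [Fintype m]

theorem HasDerivAt.matrix_mul {A : 𝕜 → Matrix l m 𝕜} {B : 𝕜 → Matrix m n 𝕜}
    {A' : Matrix l m 𝕜} {B' : Matrix m n 𝕜} (hA : HasDerivAt A A' t) (hB : HasDerivAt B B' t) :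
    HasDerivAt (fun s => A s * B s) (A' * B t + A t * B') t := by
  rw [hasDerivAt_matrix_iff] at *
  intro i j
  have hij : HasDerivAt (fun s => ∑ k, A s i k * B s k j)
      (∑ k, (A' i k * B t k j + A t i k * B' k j)) t :=
    HasDerivAt.fun_sum fun k _ => (hA i k).mul (hB k j)
  simpa only [mul_apply, Matrix.add_apply, Finset.sum_add_distrib] using hij

theorem HasDerivAt.matrix_transpose {A : 𝕜 → Matrix m n 𝕜} {A' : Matrix m n 𝕜}
    (hA : HasDerivAt A A' t) : HasDerivAt (fun s => (A s)ᵀ) A'ᵀ t := by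
  rw [hasDerivAt_matrix_iff] at *
  exact fun i j => hA j i

variable {F S : 𝕜 → Matrix n n 𝕜} {F' S' : Matrix n n 𝕜}

theorem HasDerivAt.matrix_mul_mul_transpose (hF : HasDerivAt F F' t) (hS : HasDerivAt S S' t) :
    HasDerivAt (fun s => F s * S s * (F s)ᵀ)
      (F' * S t * (F t)ᵀ + F t * S' * (F t)ᵀ + F t * S t * F'ᵀ) t := by
  convert (hF.matrix_mul hS).matrix_mul hF.matrix_transpose using 1
  noncomm_ring

theorem HasDerivAt.greenLagrangeStrain [DecidableEq n] (hF : HasDerivAt F F' t) :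
    HasDerivAt (fun s => (2⁻¹ : 𝕜) • ((F s)ᵀ * F s - 1))
      ((2⁻¹ : 𝕜) • (F'ᵀ * F t + (F t)ᵀ * F')) t :=
  ((hF.matrix_transpose.matrix_mul hF).sub_const 1).const_smul (2⁻¹ : 𝕜)

end Calculus

section Algebra

variable {n R : Type*} [Fintype n] [DecidableEq n] [CommRing R] {F : Matrix n n R}
  (F' S : Matrix n n R)

theorem velocityGradient_mul_pushforward (hF : IsUnit F.det) :
    F' * F⁻¹ * (F * S * Fᵀ) = F' * S * Fᵀ := by
  rw [Matrix.mul_assoc F S, Matrix.mul_assoc F', nonsing_inv_mul_cancel_left _ _ hF,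
    Matrix.mul_assoc]

theorem pushforward_mul_velocityGradient_transpose (hF : IsUnit F.det) :
    F * S * Fᵀ * (F' * F⁻¹)ᵀ = F * S * F'ᵀ := by
  rw [transpose_mul, transpose_nonsing_inv, Matrix.mul_assoc (F * S),
    mul_nonsing_inv_cancel_left _ _ (isUnit_det_transpose F hF)]

variable {F'}

theorem oldroydRate_pushforward (S' : Matrix n n R) (hF : IsUnit F.det) :
    F' * S * Fᵀ + F * S' * Fᵀ + F * S * F'ᵀ - F' * F⁻¹ * (F * S * Fᵀ)
      - F * S * Fᵀ * (F' * F⁻¹)ᵀ = F * S' * Fᵀ := by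
  rw [velocityGradient_mul_pushforward _ _ hF, pushforward_mul_velocityGradient_transpose _ _ hF]
  abel

theorem trace_pushforward_transpose_mul_smul_velocityGradient_add (c : R) (hF : IsUnit F.det) :
    ((F * S * Fᵀ)ᵀ * (c • (F' * F⁻¹ + (F' * F⁻¹)ᵀ))).trace
      = (Sᵀ * (c • (F'ᵀ * F + Fᵀ * F'))).trace := by
  have hpush : (F * S * Fᵀ)ᵀ = F * Sᵀ * Fᵀ := by
    rw [transpose_mul, transpose_mul, transpose_transpose, Matrix.mul_assoc]
  have hl : ((F * Sᵀ * Fᵀ) * (F' * F⁻¹)).trace = (Sᵀ * (Fᵀ * F')).trace := by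
    rw [trace_mul_comm, velocityGradient_mul_pushforward _ _ hF, trace_mul_comm,
      ← Matrix.mul_assoc, trace_mul_comm]
  have hlT : ((F * Sᵀ * Fᵀ) * (F' * F⁻¹)ᵀ).trace = (Sᵀ * (F'ᵀ * F)).trace := by
    rw [pushforward_mul_velocityGradient_transpose _ _ hF, ← trace_mul_cycle, Matrix.mul_assoc]
  rw [Matrix.mul_smul, Matrix.mul_smul, trace_smul, trace_smul, hpush, Matrix.mul_add, trace_add,
    hl, hlT, ← trace_add, ← Matrix.mul_add, add_comm]

theorem mul_mul_transpose_injective (hF : IsUnit F.det) :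
    Function.Injective fun X : Matrix n n R => F * X * Fᵀ := by
  intro X Y hXY
  have hFT := isUnit_det_transpose F hF
  simpa only [Matrix.mul_assoc, nonsing_inv_mul_cancel_left _ _ hF,
    mul_nonsing_inv_cancel_right _ _ hFT] using congrArg (fun M => F⁻¹ * M * Fᵀ⁻¹) hXY

end Algebra

theorem active_piola_kirchhoff_evolution_general
    (n : ℕ) (F S Sf F' S' : ℝ → Matrix (Fin n) (Fin n) ℝ) (p0 : ℝ → ℝ)
    (ℓ0 fp koff : ℝ)
    (hF : ∀ t : ℝ, HasDerivAt F (F' t) t)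
    (hS : ∀ t : ℝ, HasDerivAt S (S' t) t)
    (hFinv : ∀ t : ℝ, IsUnit (F t).det)
    (hkirchhoff : ∀ t : ℝ,
      deriv (fun s : ℝ => F s * S s * (F s)ᵀ) t
          - (F' t * (F t)⁻¹) * (F t * S t * (F t)ᵀ)
          - (F t * S t * (F t)ᵀ) * (F' t * (F t)⁻¹)ᵀ
        = (-(1 / (ℓ0 * p0 t * fp)) *
              (((F t * S t * (F t)ᵀ)ᵀ *
                ((2⁻¹ : ℝ) • ((F' t * (F t)⁻¹) + (F' t * (F t)⁻¹)ᵀ))).trace))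
            • (F t * S t * (F t)ᵀ)
          + F t * Sf t * (F t)ᵀ - koff • (F t * S t * (F t)ᵀ)) :
    ∀ t : ℝ,
      S' t = (-(1 / (ℓ0 * p0 t * fp)) *
            (((S t)ᵀ * deriv (fun s : ℝ => (2⁻¹ : ℝ) • ((F s)ᵀ * F s - 1)) t).trace))
          • S t
        + Sf t - koff • S t := by
  intro t
  have hτ : deriv (fun s : ℝ => F s * S s * (F s)ᵀ) t
      = F' t * S t * (F t)ᵀ + F t * S' t * (F t)ᵀ + F t * S t * (F' t)ᵀ :=
    ((hF t).matrix_mul_mul_transpose (hS t)).deriv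
  have hE : deriv (fun s : ℝ => (2⁻¹ : ℝ) • ((F s)ᵀ * F s - 1)) t
      = (2⁻¹ : ℝ) • ((F' t)ᵀ * F t + (F t)ᵀ * F' t) :=
    (hF t).greenLagrangeStrain.deriv
  have key := hkirchhoff t
  rw [hτ, oldroydRate_pushforward _ _ (hFinv t),
    trace_pushforward_transpose_mul_smul_velocityGradient_add _ _ (hFinv t), ← hE] at key
  apply mul_mul_transpose_injective (hFinv t)
  simpa only [Matrix.mul_add, Matrix.mul_sub, Matrix.add_mul, Matrix.sub_mul, Matrix.mul_smul,
    Matrix.smul_mul] using key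

/-- Lagrangian form of the active stress evolution: let `F, S, S^f : ℝ → Matrix n n ℝ` be
differentiable with `F t` invertible and `S t` symmetric, `p0 > 0`, `ℓ0 > 0`, `f^p > 0`,
and set `l = F'·F⁻¹`, `τ = F·S·Fᵀ`, `τ^f = F·S^f·Fᵀ`, `E = ½(FᵀF − I)`. If `τ` satisfies
`τ' − l·τ − τ·lᵀ = −(1/(ℓ0 p0 f^p))·(τ : l^{sym})·τ + τ^f − k_off·τ` for all `t`, then `S`
satisfies `S' = −(1/(ℓ0 p0 f^p))·(S : E')·S + S^f − k_off·S`
(Frobenius inner product `A:B = trace (Aᵀ * B)`). -/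
theorem active_piola_kirchhoff_evolution
    (n : ℕ) (F S Sf F' S' : ℝ → Matrix (Fin n) (Fin n) ℝ) (p0 : ℝ → ℝ)
    (ℓ0 fp koff : ℝ) (hℓ0 : 0 < ℓ0) (hfp : 0 < fp) (hp0 : ∀ t : ℝ, 0 < p0 t)
    (hF : ∀ t : ℝ, HasDerivAt F (F' t) t)
    (hS : ∀ t : ℝ, HasDerivAt S (S' t) t)
    (hSf : Differentiable ℝ Sf)
    (hFinv : ∀ t : ℝ, IsUnit (F t).det)
    (hSsym : ∀ t : ℝ, (S t)ᵀ = S t)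
    (hkirchhoff : ∀ t : ℝ,
      deriv (fun s : ℝ => F s * S s * (F s)ᵀ) t
          - (F' t * (F t)⁻¹) * (F t * S t * (F t)ᵀ)
          - (F t * S t * (F t)ᵀ) * (F' t * (F t)⁻¹)ᵀ
        = (-(1 / (ℓ0 * p0 t * fp)) *
              (((F t * S t * (F t)ᵀ)ᵀ *
                ((2⁻¹ : ℝ) • ((F' t * (F t)⁻¹) + (F' t * (F t)⁻¹)ᵀ))).trace))
            • (F t * S t * (F t)ᵀ)
          + F t * Sf t * (F t)ᵀ - koff • (F t * S t * (F t)ᵀ)) :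
    ∀ t : ℝ,
      S' t = (-(1 / (ℓ0 * p0 t * fp)) *
            (((S t)ᵀ * deriv (fun s : ℝ => (2⁻¹ : ℝ) • ((F s)ᵀ * F s - 1)) t).trace))
          • S t
        + Sf t - koff • S t :=
  active_piola_kirchhoff_evolution_general n F S Sf F' S' p0 ℓ0 fp koff hF hS hFinv hkirchhoff
end

section
/- Let n ≥ 1, let v : ℝⁿ × ℝ → ℝⁿ and c : ℝⁿ × ℝ → ℝ be C¹, and let y : ℝⁿ × ℝ → ℝⁿ be a motion that is C¹ in time and C¹ in space with ∂_t y(X,t) = v(y(X,t), t), such that F(X,t) = D_X y(X,t) is invertible, depends differentiably on t, and satisfies ∂_t F(X,t) = D_x v(y(X,t),t) · F(X,t). If c satisfies the Eulerian continuity equation ∂_t c(x,t) + div_x (c·v)(x,t) = 0 for all (x,t), then for every fixed X the function t ↦ det F(X,t) · c(y(X,t), t) is constant; i.e. the Lagrangian cell number conservation equation d/dt (J c_t) = 0 holds with J = det F. -/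
/-!
Along a trajectory `s ↦ y(X,s)`, Jacobi's formula turns `∂ₜF = (D_x v) F` into
`∂ₜ det F = tr(D_x v) · det F`, and the chain rule gives `d/dt c(y,t) = ∂ₜc + D_x c · v`.
Since `div(c v) = c tr(D_x v) + D_x c · v`, the derivative of `det F · c(y,t)` is
`det F · (∂ₜc + div(c v)) = 0`.
-/

namespace Matrix

theorem det_updateRow_mul_self {ι R : Type*} [Fintype ι] [DecidableEq ι] [CommRing R]
    (A M : Matrix ι ι R) (i : ι) : (M.updateRow i ((A * M) i)).det = A i i * M.det := by
  have hrow : (A * M) i = ∑ k, A i k • M k := by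
    ext j; simp [mul_apply, Finset.sum_apply]
  rw [hrow, det_updateRow_sum, smul_eq_mul]

variable {𝕜 ι : Type*} [NontriviallyNormedField 𝕜] [Fintype ι] [DecidableEq ι]

variable (𝕜 ι) in
noncomputable def detRowContinuousMultilinear :
    ContinuousMultilinearMap 𝕜 (fun _ : ι => ι → 𝕜) 𝕜 where
  toMultilinearMap := (detRowAlternating : (ι → 𝕜) [⋀^ι]→ₗ[𝕜] 𝕜).toMultilinearMap
  cont := (continuous_id : Continuous (id : Matrix ι ι 𝕜 → _)).matrix_det

theorem hasDerivAt_det_of_hasDerivAt_mul {M : 𝕜 → ι → ι → 𝕜} {t : 𝕜} {A : Matrix ι ι 𝕜}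
    (h : HasDerivAt M (of.symm (A * of (M t))) t) :
    HasDerivAt (fun s => (of (M s)).det) (A.trace * (of (M t)).det) t := by
  have hD := (detRowContinuousMultilinear 𝕜 ι).hasFDerivAt (M t)
  refine (hD.comp_hasDerivAt t h).congr_deriv ?_
  rw [ContinuousMultilinearMap.linearDeriv_apply, trace, Finset.sum_mul]
  exact Finset.sum_congr rfl fun i _ => det_updateRow_mul_self A (of (M t)) i

end Matrix

open Matrix in
theorem LinearMap.hasDerivAt_det_of_hasDerivAt_comp {𝕜 E : Type*} [NontriviallyNormedField 𝕜]
    [CompleteSpace 𝕜] [NormedAddCommGroup E] [NormedSpace 𝕜 E] [FiniteDimensional 𝕜 E]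
    {F : 𝕜 → E →L[𝕜] E} {t : 𝕜} {A : E →L[𝕜] E} (h : HasDerivAt F (A ∘L F t) t) :
    HasDerivAt (fun s => LinearMap.det (F s : E →ₗ[𝕜] E))
      (LinearMap.trace 𝕜 E A * LinearMap.det (F t : E →ₗ[𝕜] E)) t := by
  let b := Module.finBasis 𝕜 E
  let M : 𝕜 → Fin _ → Fin _ → 𝕜 := fun s => of.symm (toMatrix b b (F s))
  have hM : HasDerivAt M (of.symm (toMatrix b b A * of (M t))) t := by
    refine hasDerivAt_pi.2 fun i => hasDerivAt_pi.2 fun j => ?_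
    have hcol : HasDerivAt (fun s => F s (b j)) (A (F t (b j))) t := by
      simpa using h.clm_apply (hasDerivAt_const t (b j))
    have hentry := (toContinuousLinearMap (b.coord i)).hasFDerivAt.comp_hasDerivAt t hcol
    simpa [M, ← toMatrix_comp, toMatrix_apply, Function.comp_def] using hentry
  have hdet : ∀ s, LinearMap.det (F s : E →ₗ[𝕜] E) = (of (M s)).det := fun s =>
    (det_toMatrix b _).symm
  simp only [hdet, trace_eq_matrix_trace 𝕜 b]
  exact hasDerivAt_det_of_hasDerivAt_mul hM

section MaterialDerivative

variable {𝕜 E G : Type*} [NontriviallyNormedField 𝕜] [NormedAddCommGroup E] [NormedSpace 𝕜 E]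
  [NormedAddCommGroup G] [NormedSpace 𝕜 G]

theorem DifferentiableAt.hasDerivAt_comp_prodMk_self {c : E × 𝕜 → G} {γ : 𝕜 → E} {w : E} {t : 𝕜}
    (hc : DifferentiableAt 𝕜 c (γ t, t)) (hγ : HasDerivAt γ w t) :
    HasDerivAt (fun s => c (γ s, s))
      (fderiv 𝕜 (fun x => c (x, t)) (γ t) w + deriv (fun s => c (γ t, s)) t) t := by
  have hD := hc.hasFDerivAt
  have hx : fderiv 𝕜 (fun x => c (x, t)) (γ t) = fderiv 𝕜 c (γ t, t) ∘L .inl 𝕜 E 𝕜 :=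
    (hD.comp (γ t) (hasFDerivAt_prodMk_left (γ t) t)).fderiv
  have hs : deriv (fun s => c (γ t, s)) t = fderiv 𝕜 c (γ t, t) (0, 1) :=
    (hD.comp_hasDerivAt t ((hasDerivAt_const t (γ t)).prodMk (hasDerivAt_id t))).deriv
  rw [hx, hs]
  have hcurve : HasDerivAt (fun s => (γ s, s)) (w, 1) t := hγ.prodMk (hasDerivAt_id t)
  refine (hD.comp_hasDerivAt_of_eq t hcurve rfl).congr_deriv ?_
  have hw : ((w, 1) : E × 𝕜) = (w, 0) + (0, 1) := by simp
  rw [hw, map_add]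
  rfl

end MaterialDerivative

namespace EuclideanSpace

variable {𝕜 ι : Type*} [RCLike 𝕜] [Fintype ι] [DecidableEq ι]

theorem trace_eq_sum_apply_single (T : EuclideanSpace 𝕜 ι →ₗ[𝕜] EuclideanSpace 𝕜 ι) :
    LinearMap.trace 𝕜 _ T = ∑ k, T (single k 1) k := by
  simp [LinearMap.trace_eq_sum_inner T (basisFun ι 𝕜), inner_single_left]

theorem sum_smul_single (w : EuclideanSpace 𝕜 ι) : ∑ k, w k • single k (1 : 𝕜) = w := by
  simpa using (basisFun ι 𝕜).sum_repr w

theorem sum_fderiv_mul_apply_single {c : EuclideanSpace ℝ ι → ℝ}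
    {v : EuclideanSpace ℝ ι → EuclideanSpace ℝ ι} {x : EuclideanSpace ℝ ι}
    (hc : DifferentiableAt ℝ c x) (hv : DifferentiableAt ℝ v x) :
    ∑ k, fderiv ℝ (fun x' => c x' * v x' k) x (single k 1)
      = c x * LinearMap.trace ℝ _ (fderiv ℝ v x : EuclideanSpace ℝ ι →ₗ[ℝ] EuclideanSpace ℝ ι)
        + fderiv ℝ c x (v x) := by
  have hterm : ∀ k, fderiv ℝ (fun x' => c x' * v x' k) x (single k 1)
      = c x * fderiv ℝ v x (single k 1) k + v x k * fderiv ℝ c x (single k 1) := by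
    intro k
    have hvk : HasFDerivAt (fun x' => v x' k) ((proj k).comp (fderiv ℝ v x)) x :=
      (proj k : EuclideanSpace ℝ ι →L[ℝ] ℝ).hasFDerivAt.comp x hv.hasFDerivAt
    have hmul : HasFDerivAt (fun x' => c x' * v x' k)
        (c x • (proj k).comp (fderiv ℝ v x) + v x k • fderiv ℝ c x) x :=
      hc.hasFDerivAt.mul hvk
    rw [hmul.fderiv]
    simp
  conv_rhs => rw [← sum_smul_single (v x)]
  simp [hterm, trace_eq_sum_apply_single, Finset.sum_add_distrib, Finset.mul_sum]

end EuclideanSpace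

theorem lagrangian_cell_number_conservation_general
    (n : ℕ)
    (v : EuclideanSpace ℝ (Fin n) × ℝ → EuclideanSpace ℝ (Fin n))
    (c : EuclideanSpace ℝ (Fin n) × ℝ → ℝ)
    (y : EuclideanSpace ℝ (Fin n) × ℝ → EuclideanSpace ℝ (Fin n))
    (F : EuclideanSpace ℝ (Fin n) → ℝ →
      (EuclideanSpace ℝ (Fin n) →L[ℝ] EuclideanSpace ℝ (Fin n)))
    (hv : ContDiff ℝ 1 v) (hc : ContDiff ℝ 1 c)
    (hyt : ∀ (X : EuclideanSpace ℝ (Fin n)) (t : ℝ),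
      HasDerivAt (fun s : ℝ => y (X, s)) (v (y (X, t), t)) t)
    (hFt : ∀ (X : EuclideanSpace ℝ (Fin n)) (t : ℝ),
      HasDerivAt (fun s : ℝ => F X s)
        ((fderiv ℝ (fun x => v (x, t)) (y (X, t))).comp (F X t)) t)
    (hcontinuity : ∀ (x : EuclideanSpace ℝ (Fin n)) (t : ℝ),
      deriv (fun s : ℝ => c (x, s)) t
        + ∑ k : Fin n,
            fderiv ℝ (fun x' => c (x', t) * v (x', t) k) x (EuclideanSpace.single k 1)
        = 0) :
    ∀ (X : EuclideanSpace ℝ (Fin n)) (t₁ t₂ : ℝ),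
      LinearMap.det (F X t₁).toLinearMap * c (y (X, t₁), t₁)
        = LinearMap.det (F X t₂).toLinearMap * c (y (X, t₂), t₂) := by
  intro X t₁ t₂
  have hcd := hc.differentiable one_ne_zero
  have hvd := hv.differentiable one_ne_zero
  have hconst : ∀ t, HasDerivAt
      (fun s => LinearMap.det (F X s).toLinearMap * c (y (X, s), s)) 0 t := by
    intro t
    have hJ := LinearMap.hasDerivAt_det_of_hasDerivAt_comp (hFt X t)
    have hmaterial := (hcd _).hasDerivAt_comp_prodMk_self (hyt X t)
    have hdiv := EuclideanSpace.sum_fderiv_mul_apply_single (c := fun x => c (x, t))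
      (v := fun x => v (x, t)) (x := y (X, t)) (by fun_prop) (by fun_prop)
    have hcont := hcontinuity (y (X, t)) t
    rw [hdiv] at hcont
    refine (hJ.mul hmaterial).congr_deriv ?_
    linear_combination LinearMap.det (F X t).toLinearMap * hcont
  exact is_const_of_deriv_eq_zero (fun t => (hconst t).differentiableAt)
    (fun t => (hconst t).deriv) t₁ t₂

/-- Lagrangian cell number conservation: if the spatial cell number density `c` satisfies
the Eulerian continuity equation `∂ₜc + div_x (c v) = 0` and `y` is a motion with velocity
`v`, deformation gradient `F = D_X y` (invertible, differentiable in time with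
`∂ₜF = (D_x v ∘ y) · F`), then for every material point `X` the map
`t ↦ det F(X,t) · c(y(X,t), t)` is constant, i.e. `d/dt (J c_t) = 0` with `J = det F`. -/
theorem lagrangian_cell_number_conservation
    (n : ℕ) (hn : 1 ≤ n)
    (v : EuclideanSpace ℝ (Fin n) × ℝ → EuclideanSpace ℝ (Fin n))
    (c : EuclideanSpace ℝ (Fin n) × ℝ → ℝ)
    (y : EuclideanSpace ℝ (Fin n) × ℝ → EuclideanSpace ℝ (Fin n))
    (F : EuclideanSpace ℝ (Fin n) → ℝ →
      (EuclideanSpace ℝ (Fin n) →L[ℝ] EuclideanSpace ℝ (Fin n)))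
    (hv : ContDiff ℝ 1 v) (hc : ContDiff ℝ 1 c)
    (hyt : ∀ (X : EuclideanSpace ℝ (Fin n)) (t : ℝ),
      HasDerivAt (fun s : ℝ => y (X, s)) (v (y (X, t), t)) t)
    (hyX : ∀ (X : EuclideanSpace ℝ (Fin n)) (t : ℝ),
      HasFDerivAt (fun X' => y (X', t)) (F X t) X)
    (hFinv : ∀ (X : EuclideanSpace ℝ (Fin n)) (t : ℝ),
      LinearMap.det (F X t).toLinearMap ≠ 0)
    (hFt : ∀ (X : EuclideanSpace ℝ (Fin n)) (t : ℝ),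
      HasDerivAt (fun s : ℝ => F X s)
        ((fderiv ℝ (fun x => v (x, t)) (y (X, t))).comp (F X t)) t)
    (hcontinuity : ∀ (x : EuclideanSpace ℝ (Fin n)) (t : ℝ),
      deriv (fun s : ℝ => c (x, s)) t
        + ∑ k : Fin n,
            fderiv ℝ (fun x' => c (x', t) * v (x', t) k) x (EuclideanSpace.single k 1)
        = 0) :
    ∀ (X : EuclideanSpace ℝ (Fin n)) (t₁ t₂ : ℝ),
      LinearMap.det (F X t₁).toLinearMap * c (y (X, t₁), t₁)
        = LinearMap.det (F X t₂).toLinearMap * c (y (X, t₂), t₂) :=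
  lagrangian_cell_number_conservation_general n v c y F hv hc hyt hFt hcontinuity
end
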